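/- Suppose n ≥ 2k ≥ 2, A ∈ ℝ^{m×n} satisfies the restricted isometry property of order 2k with constant δ_{2k} < √2 − 1, and y = Ax + η for some k-sparse vector x ∈ Σ_k and η ∈ ℝ^m with ‖η‖₂ ≤ ε. Let x̂ be any minimizer of ‖z‖₁ over the set B_ε(y) = {z ∈ ℝⁿ : ‖y − Az‖₂ ≤ ε}. Then ‖x̂ − x‖₂ ≤ C₂·ε, where C₂ = 4√(1+δ_{2k}) / (1 − (√2+1)δ_{2k}). -/

import Mathlib

/-!
Write `h = x̂ - x`. Since `x` is feasible, `ℓ₁`-minimality of `x̂` puts `h` in the cone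
`‖h_{T₀ᶜ}‖₁ ≤ ‖h_{T₀}‖₁`, where `T₀ ⊇ supp x` has `k` elements, and `‖A h‖₂ ≤ 2ε` because both `x`
and `x̂` are feasible. Split `T₀ᶜ` into blocks `T₁, T₂, …` of `k` indices in order of decreasing
`|hᵢ|`. Every entry on `T_{j+1}` is at most the average of `|h|` on `T_j`, so
`∑_{j ≥ 2} ‖h_{T_j}‖₂ ≤ ‖h_{T₀ᶜ}‖₁ / √k ≤ ‖h_{T₀}‖₂ ≤ ‖h_{T₀ ∪ T₁}‖₂`.
By polarization, RIP gives `|⟪A u, A v⟫| ≤ δ ‖u‖₂ ‖v‖₂` for disjointly supported `k`-sparse `u, v`;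
expanding `‖A h_{T₀ ∪ T₁}‖₂² = ⟪A h_{T₀ ∪ T₁}, A h⟫ - ∑_{j ≥ 2} ⟪A h_{T₀ ∪ T₁}, A h_{T_j}⟫` then
yields `(1 - (√2 + 1) δ) ‖h_{T₀ ∪ T₁}‖₂ ≤ √(1 + δ) ‖A h‖₂`, and `‖h‖₂ ≤ 2 ‖h_{T₀ ∪ T₁}‖₂`.
-/

open Finset

/-- The ℓ₂-norm on `Fin n → ℝ`. -/
noncomputable def l2norm {n : ℕ} (x : Fin n → ℝ) : ℝ := Real.sqrt (∑ i, (x i) ^ 2)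

/-- The ℓ₁-norm on `Fin n → ℝ`. -/
def l1norm {n : ℕ} (x : Fin n → ℝ) : ℝ := ∑ i, |x i|

/-- A vector is `k`-sparse if it has at most `k` nonzero components. -/
def KSparse {n : ℕ} (k : ℕ) (x : Fin n → ℝ) : Prop :=
  Set.ncard {i : Fin n | x i ≠ 0} ≤ k

/-- `A` satisfies the restricted isometry property of order `k` with constant `δ`. -/
def RIP {m n : ℕ} (A : Matrix (Fin m) (Fin n) ℝ) (k : ℕ) (δ : ℝ) : Prop :=
  ∀ u : Fin n → ℝ, KSparse k u →
    (1 - δ) * ∑ i, (u i) ^ 2 ≤ ∑ i, (A.mulVec u i) ^ 2 ∧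
    ∑ i, (A.mulVec u i) ^ 2 ≤ (1 + δ) * ∑ i, (u i) ^ 2

open Function Matrix

section L2

variable {n : ℕ}

lemma l2norm_eq_norm (u : Fin n → ℝ) : l2norm u = ‖WithLp.toLp 2 u‖ := by
  simp [l2norm, EuclideanSpace.norm_eq]

lemma dotProduct_eq_inner (u v : Fin n → ℝ) :
    u ⬝ᵥ v = inner ℝ (WithLp.toLp 2 u) (WithLp.toLp 2 v) := by
  simp [EuclideanSpace.inner_eq_star_dotProduct, dotProduct_comm]

lemma l2norm_nonneg (u : Fin n → ℝ) : 0 ≤ l2norm u := Real.sqrt_nonneg _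

lemma l2norm_sq (u : Fin n → ℝ) : l2norm u ^ 2 = ∑ i, u i ^ 2 :=
  Real.sq_sqrt (by positivity)

@[simp]
lemma l2norm_zero : l2norm (0 : Fin n → ℝ) = 0 := by simp [l2norm]

lemma l2norm_eq_zero {u : Fin n → ℝ} : l2norm u = 0 ↔ u = 0 := by
  simp [l2norm_eq_norm]

lemma l2norm_add_le (u v : Fin n → ℝ) : l2norm (u + v) ≤ l2norm u + l2norm v := by
  simpa [l2norm_eq_norm] using norm_add_le (WithLp.toLp 2 u) (WithLp.toLp 2 v)

lemma l2norm_sub_le (u v : Fin n → ℝ) : l2norm (u - v) ≤ l2norm u + l2norm v := by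
  simpa [l2norm_eq_norm] using norm_sub_le (WithLp.toLp 2 u) (WithLp.toLp 2 v)

lemma l2norm_sum_le {ι : Type*} (s : Finset ι) (u : ι → Fin n → ℝ) :
    l2norm (∑ j ∈ s, u j) ≤ ∑ j ∈ s, l2norm (u j) := by
  simpa [l2norm_eq_norm, WithLp.toLp_sum] using norm_sum_le s (fun j => WithLp.toLp 2 (u j))

lemma l2norm_smul (c : ℝ) (u : Fin n → ℝ) : l2norm (c • u) = |c| * l2norm u := by
  simp [l2norm_eq_norm, norm_smul]

lemma dotProduct_le_l2norm_mul (u v : Fin n → ℝ) : u ⬝ᵥ v ≤ l2norm u * l2norm v := by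
  simpa [l2norm_eq_norm, dotProduct_eq_inner] using
    real_inner_le_norm (WithLp.toLp 2 u) (WithLp.toLp 2 v)

lemma l2norm_add_sq (u v : Fin n → ℝ) :
    l2norm (u + v) ^ 2 = l2norm u ^ 2 + 2 * (u ⬝ᵥ v) + l2norm v ^ 2 := by
  simpa [l2norm_eq_norm, dotProduct_eq_inner] using
    norm_add_sq_real (WithLp.toLp 2 u) (WithLp.toLp 2 v)

lemma l2norm_sub_sq (u v : Fin n → ℝ) :
    l2norm (u - v) ^ 2 = l2norm u ^ 2 - 2 * (u ⬝ᵥ v) + l2norm v ^ 2 := by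
  simpa [l2norm_eq_norm, dotProduct_eq_inner] using
    norm_sub_sq_real (WithLp.toLp 2 u) (WithLp.toLp 2 v)

lemma dotProduct_eq_zero_of_disjoint {u v : Fin n → ℝ} (huv : Disjoint (support u) (support v)) :
    u ⬝ᵥ v = 0 := by
  refine sum_eq_zero fun i _ => ?_
  by_contra hne
  exact Set.disjoint_left.1 huv (left_ne_zero_of_mul hne) (right_ne_zero_of_mul hne)

lemma l2norm_add_sq_of_disjoint {u v : Fin n → ℝ} (huv : Disjoint (support u) (support v)) :
    l2norm (u + v) ^ 2 = l2norm u ^ 2 + l2norm v ^ 2 := by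
  rw [l2norm_add_sq, dotProduct_eq_zero_of_disjoint huv]; ring

lemma l2norm_sub_sq_of_disjoint {u v : Fin n → ℝ} (huv : Disjoint (support u) (support v)) :
    l2norm (u - v) ^ 2 = l2norm u ^ 2 + l2norm v ^ 2 := by
  rw [l2norm_sub_sq, dotProduct_eq_zero_of_disjoint huv]; ring

lemma l2norm_add_le_sqrt_two_mul {u v : Fin n → ℝ} (huv : Disjoint (support u) (support v)) :
    l2norm u + l2norm v ≤ √2 * l2norm (u + v) := by
  rw [← Real.sqrt_sq (l2norm_nonneg (u + v)), ← Real.sqrt_mul zero_le_two,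
    l2norm_add_sq_of_disjoint huv]
  apply Real.le_sqrt_of_sq_le
  nlinarith [sq_nonneg (l2norm u - l2norm v)]

lemma l2norm_le_l2norm_add_of_disjoint {u v : Fin n → ℝ} (huv : Disjoint (support u) (support v)) :
    l2norm u ≤ l2norm (u + v) := by
  refine (pow_le_pow_iff_left₀ (l2norm_nonneg _) (l2norm_nonneg _) two_ne_zero).1 ?_
  rw [l2norm_add_sq_of_disjoint huv]
  nlinarith [sq_nonneg (l2norm v)]

lemma l2norm_indicator_sq (S : Finset (Fin n)) (u : Fin n → ℝ) :
    l2norm ((S : Set (Fin n)).indicator u) ^ 2 = ∑ i ∈ S, u i ^ 2 := by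
  rw [l2norm_sq, ← sum_indicator_subset _ S.subset_univ]
  simp [Set.indicator_apply, apply_ite (· ^ 2)]

end L2

section Sparse

variable {n k l : ℕ}

lemma kSparse_of_support_subset {u : Fin n → ℝ} {S : Finset (Fin n)} (hu : support u ⊆ S)
    (hS : #S ≤ k) : KSparse k u :=
  (Set.ncard_le_ncard hu (finite_toSet S)).trans ((Set.ncard_coe_finset S).trans_le hS)

lemma kSparse_indicator {S : Finset (Fin n)} (hS : #S ≤ k) (u : Fin n → ℝ) :
    KSparse k ((S : Set (Fin n)).indicator u) :=
  kSparse_of_support_subset Set.support_indicator_subset hS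

lemma KSparse.mono {u v : Fin n → ℝ} (hv : KSparse k v) (huv : support u ⊆ support v) :
    KSparse k u :=
  (Set.ncard_le_ncard huv (Set.toFinite _)).trans hv

lemma KSparse.union {u v w : Fin n → ℝ} (hu : KSparse k u) (hv : KSparse l v)
    (hw : support w ⊆ support u ∪ support v) : KSparse (k + l) w :=
  ((Set.ncard_le_ncard hw (Set.toFinite _)).trans (Set.ncard_union_le _ _)).trans
    (add_le_add hu hv)

lemma KSparse.smul {u : Fin n → ℝ} (hu : KSparse k u) (c : ℝ) : KSparse k (c • u) :=
  hu.mono (support_const_smul_subset c u)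

lemma KSparse.exists_superset {x : Fin n → ℝ} (hx : KSparse k x) (hkn : k ≤ n) :
    ∃ T : Finset (Fin n), support x ⊆ T ∧ #T = k := by
  classical
  obtain ⟨T, hxT, hT⟩ := exists_superset_card_eq (s := (support x).toFinset) (n := k)
    (by rwa [← Set.ncard_eq_toFinset_card']) (by simpa using hkn)
  exact ⟨T, by simpa using hxT, hT⟩

end Sparse

namespace RIP

variable {m n k l : ℕ} {A : Matrix (Fin m) (Fin n) ℝ} {δ : ℝ} {u v : Fin n → ℝ}

lemma sq_l2norm_mulVec_le (hA : RIP A k δ) (hu : KSparse k u) :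
    l2norm (A *ᵥ u) ^ 2 ≤ (1 + δ) * l2norm u ^ 2 := by
  simpa only [l2norm_sq] using (hA u hu).2

lemma le_sq_l2norm_mulVec (hA : RIP A k δ) (hu : KSparse k u) :
    (1 - δ) * l2norm u ^ 2 ≤ l2norm (A *ᵥ u) ^ 2 := by
  simpa only [l2norm_sq] using (hA u hu).1

lemma l2norm_mulVec_le (hA : RIP A k δ) (hu : KSparse k u) :
    l2norm (A *ᵥ u) ≤ √(1 + δ) * l2norm u := by
  rw [← Real.sqrt_sq (l2norm_nonneg (A *ᵥ u)), ← Real.sqrt_sq (l2norm_nonneg u),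
    ← Real.sqrt_mul' _ (sq_nonneg _)]
  exact Real.sqrt_le_sqrt (sq_l2norm_mulVec_le hA hu)

/-- Polarization: `4 ⟪Au, Av⟫ = ‖A(u + v)‖² - ‖A(u - v)‖²`, and `u ± v` have the same norm. -/
lemma abs_dotProduct_mulVec_le_sq_add_sq (hA : RIP A (k + l) δ) (hu : KSparse k u)
    (hv : KSparse l v) (huv : Disjoint (support u) (support v)) :
    |(A *ᵥ u) ⬝ᵥ (A *ᵥ v)| ≤ δ * (l2norm u ^ 2 + l2norm v ^ 2) / 2 := by
  have hadd := hA (u + v) (hu.union hv (support_add u v))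
  have hsub := hA (u - v) (hu.union hv (support_sub u v))
  simp only [← l2norm_sq, mulVec_add, mulVec_sub, l2norm_add_sq, l2norm_sub_sq,
    l2norm_add_sq_of_disjoint huv, l2norm_sub_sq_of_disjoint huv] at hadd hsub
  rw [abs_le]
  constructor <;> linarith [hadd.1, hadd.2, hsub.1, hsub.2]

lemma abs_dotProduct_mulVec_le (hA : RIP A (k + l) δ) (hu : KSparse k u) (hv : KSparse l v)
    (huv : Disjoint (support u) (support v)) :
    |(A *ᵥ u) ⬝ᵥ (A *ᵥ v)| ≤ δ * l2norm u * l2norm v := by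
  rcases (l2norm_nonneg u).eq_or_lt with hu0 | hu0
  · simp [l2norm_eq_zero.1 hu0.symm]
  rcases (l2norm_nonneg v).eq_or_lt with hv0 | hv0
  · simp [l2norm_eq_zero.1 hv0.symm]
  -- apply the polarized bound to the rescaled pair `‖v‖ • u`, `‖u‖ • v`
  have h := abs_dotProduct_mulVec_le_sq_add_sq hA (hu.smul (l2norm v)) (hv.smul (l2norm u))
    (huv.mono (support_const_smul_subset _ _) (support_const_smul_subset _ _))
  simp only [mulVec_smul, smul_dotProduct, dotProduct_smul, smul_eq_mul, abs_mul,
    l2norm_smul, abs_of_pos hu0, abs_of_pos hv0] at h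
  have key : l2norm v * l2norm u * |(A *ᵥ u) ⬝ᵥ (A *ᵥ v)|
      ≤ l2norm v * l2norm u * (δ * l2norm u * l2norm v) := by linarith
  exact le_of_mul_le_mul_left key (mul_pos hv0 hu0)

end RIP

section L1

variable {n : ℕ}

lemma sum_abs_le_sqrt_card_mul_l2norm_indicator (S : Finset (Fin n)) (u : Fin n → ℝ) :
    ∑ i ∈ S, |u i| ≤ √(#S : ℝ) * l2norm ((S : Set (Fin n)).indicator u) := by
  rw [← Real.sqrt_sq (l2norm_nonneg _), ← Real.sqrt_mul (Nat.cast_nonneg _), l2norm_indicator_sq]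
  apply Real.le_sqrt_of_sq_le
  simpa only [sq_abs] using sq_sum_le_card_mul_sum_sq (s := S) (f := fun i => |u i|)

lemma sum_abs_compl_le_of_l1norm_add_le {x h : Fin n → ℝ} {T : Finset (Fin n)}
    (hx : support x ⊆ T) (hopt : l1norm (x + h) ≤ l1norm x) :
    ∑ i ∈ Tᶜ, |h i| ≤ ∑ i ∈ T, |h i| := by
  have hx0 : ∀ i ∉ T, x i = 0 := fun i hi => notMem_support.1 fun h => hi (hx h)
  have hxT : l1norm x = ∑ i ∈ T, |x i| :=
    (sum_subset T.subset_univ fun i _ hi => by simp [hx0 i hi]).symm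
  have hxhT : l1norm (x + h) = ∑ i ∈ T, |x i + h i| + ∑ i ∈ Tᶜ, |h i| := by
    rw [l1norm, ← sum_add_sum_compl T]
    congr 1
    exact sum_congr rfl fun i hi => by simp [hx0 i (mem_compl.1 hi)]
  have htri : ∑ i ∈ T, |x i| ≤ ∑ i ∈ T, |x i + h i| + ∑ i ∈ T, |h i| := by
    rw [← sum_add_distrib]
    gcongr with i
    simpa using abs_sub (x i + h i) (h i)
  linarith

end L1

section Blocks

variable {n : ℕ}

lemma exists_perm_mem_iff_lt_and_antitone (T : Finset (Fin n)) (w : Fin n → ℝ) :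
    ∃ σ : Equiv.Perm (Fin n), (∀ p, σ p ∈ T ↔ (p : ℕ) < #T) ∧
      ∀ p q : Fin n, #T ≤ p → p ≤ q → w (σ q) ≤ w (σ p) := by
  classical
  -- sort lexicographically: first the members of `T`, then by decreasing weight
  let key : Fin n → Bool ×ₗ ℝ := fun i => toLex (decide (i ∉ T), -w i)
  let σ := Tuple.sort key
  have hmono : Monotone (key ∘ σ) := Tuple.monotone_sort key
  have hdown : ∀ p q, p ≤ q → σ q ∈ T → σ p ∈ T := by
    intro p q hpq hq
    simpa [key, hq, Bool.le_iff_imp] using Prod.Lex.monotone_fst _ _ (hmono hpq)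
  have hcard : #{p | σ p ∈ T} = #T := by
    rw [← card_map σ.toEmbedding]
    congr 1
    ext i
    simp
  have hmem : ∀ p, σ p ∈ T ↔ (p : ℕ) < #T := by
    intro p
    constructor
    · intro hp
      have hsub : Iic p ⊆ ({q | σ q ∈ T} : Finset (Fin n)) := fun q hq =>
        mem_filter.2 ⟨mem_univ _, hdown q p (mem_Iic.1 hq) hp⟩
      have := card_le_card hsub
      rw [Fin.card_Iic, hcard] at this
      omega
    · intro hp
      by_contra hpT
      have hsub : ({q | σ q ∈ T} : Finset (Fin n)) ⊆ Iio p := fun q hq =>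
        mem_Iio.2 (lt_of_not_ge fun hpq => hpT (hdown p q hpq (mem_filter.1 hq).2))
      have := card_le_card hsub
      rw [Fin.card_Iio, hcard] at this
      omega
  refine ⟨σ, hmem, fun p q hp hpq => ?_⟩
  have hpT : σ p ∉ T := by rw [hmem]; omega
  have hqT : σ q ∉ T := by rw [hmem]; have := Fin.le_def.1 hpq; omega
  have := Prod.Lex.le_iff.1 (hmono hpq)
  simpa [key, hpT, hqT] using this

/-- The paper's block `T_j`, when `σ` lists `T_0` first and then the other indices by decreasing
`|h i|`. -/
def block (σ : Equiv.Perm (Fin n)) (k j : ℕ) : Finset (Fin n) :=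
  {i | (σ.symm i : ℕ) / k = j}

variable (σ : Equiv.Perm (Fin n)) {k : ℕ}

lemma mem_block {i : Fin n} {j : ℕ} : i ∈ block σ k j ↔ (σ.symm i : ℕ) / k = j := by
  simp [block]

lemma block_zero (hk : 0 < k) {T : Finset (Fin n)} (hT : ∀ p, σ p ∈ T ↔ (p : ℕ) < k) :
    block σ k 0 = T := by
  ext i
  rw [mem_block, Nat.div_eq_zero_iff_lt hk, ← hT, Equiv.apply_symm_apply]

lemma disjoint_block {j j' : ℕ} (hjj' : j ≠ j') : Disjoint (block σ k j) (block σ k j') :=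
  disjoint_left.2 fun _ hi hi' => hjj' ((mem_block σ).1 hi ▸ (mem_block σ).1 hi')

lemma mem_block_iff (hk : 0 < k) {i : Fin n} {j : ℕ} :
    i ∈ block σ k j ↔ j * k ≤ σ.symm i ∧ (σ.symm i : ℕ) < j * k + k := by
  rw [mem_block, ← add_one_mul, ← Nat.le_div_iff_mul_le hk, ← Nat.div_lt_iff_lt_mul hk]
  omega

lemma card_block_le (hk : 0 < k) (j : ℕ) : #(block σ k j) ≤ k := by
  have := card_le_card_of_injOn (fun i => (σ.symm i : ℕ)) (s := block σ k j)
    (t := Ico (j * k) (j * k + k))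
    (fun i hi => by simpa using (mem_block_iff σ hk).1 hi)
    (fun i _ i' _ hii' => σ.symm.injective (Fin.val_injective hii'))
  simpa using this

lemma card_block_eq (hk : 0 < k) {j : ℕ} (hne : (block σ k (j + 1)).Nonempty) :
    #(block σ k j) = k := by
  obtain ⟨i₀, hi₀⟩ := hne
  have hi₀' := (mem_block_iff σ hk).1 hi₀
  rw [add_one_mul] at hi₀'
  refine le_antisymm (card_block_le σ hk j) ?_
  have := card_le_card_of_surjOn (fun i => (σ.symm i : ℕ)) (s := block σ k j)
    (t := Ico (j * k) (j * k + k)) (fun p hp => by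
      simp only [coe_Ico, Set.mem_Ico] at hp
      have hpn : p < n := by have := (σ.symm i₀).isLt; omega
      exact ⟨σ ⟨p, hpn⟩, (mem_block_iff σ hk).2 (by simpa using hp), by simp⟩)
  simpa using this

lemma le_of_mem_block_succ (hk : 0 < k) {w : Fin n → ℝ}
    (hw : ∀ p q : Fin n, k ≤ p → p ≤ q → w (σ q) ≤ w (σ p)) {j : ℕ} (hj : 1 ≤ j) {i i' : Fin n}
    (hi : i ∈ block σ k (j + 1)) (hi' : i' ∈ block σ k j) : w i ≤ w i' := by
  have hpos := (mem_block_iff σ hk).1 hi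
  have hpos' := (mem_block_iff σ hk).1 hi'
  have hkj : k ≤ j * k := Nat.le_mul_of_pos_left k hj
  rw [add_one_mul] at hpos
  simpa using hw (σ.symm i') (σ.symm i) (by omega) (Fin.le_def.2 (by omega))

lemma symm_div_mem_range {N : ℕ} (hN : n ≤ N) (i : Fin n) : (σ.symm i : ℕ) / k ∈ range N :=
  mem_range.2 ((Nat.div_le_self _ _).trans_lt ((σ.symm i).isLt.trans_le hN))

lemma sum_sum_block {M : Type*} [AddCommMonoid M] {N : ℕ} (hN : n ≤ N) (f : Fin n → M) :
    ∑ j ∈ range N, ∑ i ∈ block σ k j, f i = ∑ i, f i :=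
  sum_fiberwise_of_maps_to (fun i _ => symm_div_mem_range σ hN i) f

lemma sum_indicator_block {N : ℕ} (hN : n ≤ N) (h : Fin n → ℝ) :
    ∑ j ∈ range N, (block σ k j : Set (Fin n)).indicator h = h := by
  ext i
  simp only [Finset.sum_apply, Set.indicator_apply, mem_coe, mem_block]
  rw [sum_ite_eq, if_pos (symm_div_mem_range σ hN i)]

end Blocks

section Tail

variable {n k : ℕ}

lemma l2norm_indicator_le_of_abs_le (hk : 0 < k) {S T : Finset (Fin n)} {h : Fin n → ℝ}
    (hS : #S ≤ k) (hT : #T = k) (hST : ∀ i ∈ S, ∀ i' ∈ T, |h i| ≤ |h i'|) :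
    l2norm ((S : Set (Fin n)).indicator h) ≤ (∑ i ∈ T, |h i|) / √k := by
  have hk' : (0 : ℝ) < k := Nat.cast_pos.2 hk
  set m := (∑ i ∈ T, |h i|) / k
  have hm : ∀ i ∈ S, |h i| ≤ m := fun i hi => by
    rw [le_div_iff₀ hk']
    calc |h i| * k = ∑ _i' ∈ T, |h i| := by simp [hT, mul_comm]
      _ ≤ ∑ i' ∈ T, |h i'| := sum_le_sum fun i' hi' => hST i hi i' hi'
  have hsq : l2norm ((S : Set (Fin n)).indicator h) ^ 2 ≤ ((∑ i ∈ T, |h i|) / √k) ^ 2 := by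
    rw [l2norm_indicator_sq, div_pow, Real.sq_sqrt hk'.le]
    calc ∑ i ∈ S, h i ^ 2 ≤ ∑ _i ∈ S, m ^ 2 :=
          sum_le_sum fun i hi => sq_abs (h i) ▸ pow_le_pow_left₀ (abs_nonneg _) (hm i hi) 2
      _ = #S * m ^ 2 := by simp
      _ ≤ k * m ^ 2 := by gcongr
      _ = (∑ i ∈ T, |h i|) ^ 2 / k := by rw [div_pow]; field_simp
  exact (pow_le_pow_iff_left₀ (l2norm_nonneg _) (by positivity) two_ne_zero).1 hsq

lemma sum_l2norm_indicator_block_le (σ : Equiv.Perm (Fin n)) (hk : 0 < k) {T : Finset (Fin n)}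
    {h : Fin n → ℝ} (hT : block σ k 0 = T)
    (hσ : ∀ p q : Fin n, k ≤ p → p ≤ q → |h (σ q)| ≤ |h (σ p)|) :
    ∑ j ∈ range n, l2norm ((block σ k (j + 2) : Set (Fin n)).indicator h)
      ≤ (∑ i ∈ Tᶜ, |h i|) / √k := by
  have hblock : ∀ j, l2norm ((block σ k (j + 2) : Set (Fin n)).indicator h)
      ≤ (∑ i ∈ block σ k (j + 1), |h i|) / √k := fun j => by
    rcases (block σ k (j + 2)).eq_empty_or_nonempty with hempty | hne
    · rw [hempty, coe_empty, Set.indicator_empty', l2norm_zero]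
      positivity
    · exact l2norm_indicator_le_of_abs_le hk (card_block_le σ hk _) (card_block_eq σ hk hne)
        fun i hi i' hi' => le_of_mem_block_succ σ hk (w := fun i => |h i|) hσ (by omega) hi hi'
  have hsum : ∑ j ∈ range n, ∑ i ∈ block σ k (j + 1), |h i| = ∑ i ∈ Tᶜ, |h i| := by
    have := sum_sum_block σ (N := n + 1) (k := k) (by omega) (fun i => |h i|)
    rw [sum_range_succ', hT, ← sum_add_sum_compl T] at this
    linarith
  calc _ ≤ ∑ j ∈ range n, (∑ i ∈ block σ k (j + 1), |h i|) / √k :=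
        sum_le_sum fun j _ => hblock j
    _ = _ := by rw [← sum_div, hsum]

lemma exists_sparse_decomposition_of_cone (hk : 0 < k) {T : Finset (Fin n)} (hT : #T = k)
    {h : Fin n → ℝ} (hcone : ∑ i ∈ Tᶜ, |h i| ≤ ∑ i ∈ T, |h i|) :
    ∃ r : ℕ → Fin n → ℝ, h = r 0 + r 1 + ∑ j ∈ range n, r (j + 2) ∧ (∀ j, KSparse k (r j)) ∧
      (∀ j j', j ≠ j' → Disjoint (support (r j)) (support (r j'))) ∧
      ∑ j ∈ range n, l2norm (r (j + 2)) ≤ l2norm (r 0 + r 1) := by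
  obtain ⟨σ, hσT, hσ⟩ := exists_perm_mem_iff_lt_and_antitone T (fun i => |h i|)
  rw [hT] at hσT hσ
  have hT0 : block σ k 0 = T := block_zero σ hk hσT
  set r : ℕ → Fin n → ℝ := fun j => (block σ k j : Set (Fin n)).indicator h
  have hdisj : ∀ j j', j ≠ j' → Disjoint (support (r j)) (support (r j')) := fun j j' hjj' =>
    (disjoint_coe.2 (disjoint_block σ hjj')).mono
      Set.support_indicator_subset Set.support_indicator_subset
  refine ⟨r, ?_, fun j => kSparse_indicator (card_block_le σ hk j) h, hdisj, ?_⟩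
  · have := sum_indicator_block σ (N := n + 2) (k := k) (by omega) h
    rw [sum_range_succ', sum_range_succ'] at this
    rw [← this]
    abel
  · calc _ ≤ (∑ i ∈ Tᶜ, |h i|) / √k := sum_l2norm_indicator_block_le σ hk hT0 hσ
      _ ≤ (∑ i ∈ T, |h i|) / √k := by gcongr
      _ ≤ l2norm (r 0) := by
          rw [div_le_iff₀ (by positivity), mul_comm]
          simpa [r, hT0, hT] using sum_abs_le_sqrt_card_mul_l2norm_indicator T h
      _ ≤ l2norm (r 0 + r 1) := l2norm_le_l2norm_add_of_disjoint (hdisj 0 1 (by omega))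

end Tail

namespace RIP

variable {m n k : ℕ} {A : Matrix (Fin m) (Fin n) ℝ} {δ : ℝ}

lemma one_sub_mul_l2norm_add_le (hA : RIP A (2 * k) δ) (hδ : 0 ≤ δ) {ι : Type*} {s : Finset ι}
    {u v h : Fin n → ℝ} {r : ι → Fin n → ℝ} (hh : u + v + ∑ j ∈ s, r j = h)
    (hu : KSparse k u) (hv : KSparse k v) (hr : ∀ j ∈ s, KSparse k (r j))
    (huv : Disjoint (support u) (support v))
    (hur : ∀ j ∈ s, Disjoint (support u) (support (r j)))
    (hvr : ∀ j ∈ s, Disjoint (support v) (support (r j))) :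
    (1 - δ) * l2norm (u + v) ≤
      √(1 + δ) * l2norm (A *ᵥ h) + √2 * δ * ∑ j ∈ s, l2norm (r j) := by
  rw [two_mul] at hA
  set a := l2norm (u + v)
  have huv_sparse : KSparse (k + k) (u + v) := hu.union hv (support_add u v)
  have hcross : ∀ j ∈ s, -((A *ᵥ (u + v)) ⬝ᵥ (A *ᵥ r j)) ≤ √2 * δ * a * l2norm (r j) := by
    intro j hj
    have hu_r := abs_dotProduct_mulVec_le hA hu (hr j hj) (hur j hj)
    have hv_r := abs_dotProduct_mulVec_le hA hv (hr j hj) (hvr j hj)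
    have huv_a := l2norm_add_le_sqrt_two_mul huv
    rw [mulVec_add, add_dotProduct]
    calc _ ≤ |(A *ᵥ u) ⬝ᵥ (A *ᵥ r j)| + |(A *ᵥ v) ⬝ᵥ (A *ᵥ r j)| := by
          linarith [neg_abs_le ((A *ᵥ u) ⬝ᵥ (A *ᵥ r j)), neg_abs_le ((A *ᵥ v) ⬝ᵥ (A *ᵥ r j))]
      _ ≤ δ * (l2norm u + l2norm v) * l2norm (r j) := by linarith
      _ ≤ δ * (√2 * a) * l2norm (r j) := by gcongr; exact l2norm_nonneg _
      _ = √2 * δ * a * l2norm (r j) := by ring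
  have hexpand : l2norm (A *ᵥ (u + v)) ^ 2 =
      (A *ᵥ (u + v)) ⬝ᵥ (A *ᵥ h) - ∑ j ∈ s, (A *ᵥ (u + v)) ⬝ᵥ (A *ᵥ r j) := by
    rw [← hh, mulVec_add _ (u + v), mulVec_sum, dotProduct_add, dotProduct_sum, l2norm_sq]
    simp [dotProduct, sq]
  have hmain : (1 - δ) * a ^ 2 ≤
      a * (√(1 + δ) * l2norm (A *ᵥ h) + √2 * δ * ∑ j ∈ s, l2norm (r j)) :=
    calc (1 - δ) * a ^ 2 ≤ l2norm (A *ᵥ (u + v)) ^ 2 := le_sq_l2norm_mulVec hA huv_sparse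
      _ ≤ l2norm (A *ᵥ (u + v)) * l2norm (A *ᵥ h) + ∑ j ∈ s, √2 * δ * a * l2norm (r j) := by
          rw [hexpand, sub_eq_add_neg, ← sum_neg_distrib]
          exact add_le_add (dotProduct_le_l2norm_mul _ _) (sum_le_sum hcross)
      _ ≤ √(1 + δ) * a * l2norm (A *ᵥ h) + ∑ j ∈ s, √2 * δ * a * l2norm (r j) := by
          gcongr
          · exact l2norm_nonneg _
          · exact l2norm_mulVec_le hA huv_sparse
      _ = a * (√(1 + δ) * l2norm (A *ᵥ h) + √2 * δ * ∑ j ∈ s, l2norm (r j)) := by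
          rw [mul_add, mul_sum, mul_sum]
          congr 1
          · ring
          · exact sum_congr rfl fun j _ => by ring
  rcases (show 0 ≤ a from l2norm_nonneg _).eq_or_lt with ha | ha
  · rw [← ha, mul_zero]
    exact add_nonneg (mul_nonneg (Real.sqrt_nonneg _) (l2norm_nonneg _))
      (mul_nonneg (by positivity) (sum_nonneg fun j _ => l2norm_nonneg (r j)))
  · exact le_of_mul_le_mul_left (by nlinarith) ha

theorem mul_l2norm_le_of_cone (hA : RIP A (2 * k) δ) (hδ : 0 ≤ δ) (hk : 0 < k)
    {T : Finset (Fin n)} (hT : #T = k) {h : Fin n → ℝ}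
    (hcone : ∑ i ∈ Tᶜ, |h i| ≤ ∑ i ∈ T, |h i|) :
    (1 - (√2 + 1) * δ) * l2norm h ≤ 2 * √(1 + δ) * l2norm (A *ᵥ h) := by
  obtain ⟨r, hdecomp, hsparse, hdisj, htail⟩ := exists_sparse_decomposition_of_cone hk hT hcone
  have hkey := one_sub_mul_l2norm_add_le hA hδ hdecomp.symm (hsparse 0) (hsparse 1)
    (fun j _ => hsparse (j + 2)) (hdisj 0 1 (by omega)) (fun j _ => hdisj 0 (j + 2) (by omega))
    (fun j _ => hdisj 1 (j + 2) (by omega))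
  have hsplit : l2norm h ≤ 2 * l2norm (r 0 + r 1) :=
    calc l2norm h = l2norm (r 0 + r 1 + ∑ j ∈ range n, r (j + 2)) := congrArg l2norm hdecomp
      _ ≤ l2norm (r 0 + r 1) + l2norm (∑ j ∈ range n, r (j + 2)) := l2norm_add_le _ _
      _ ≤ l2norm (r 0 + r 1) + ∑ j ∈ range n, l2norm (r (j + 2)) := by
          gcongr
          exact l2norm_sum_le _ _
      _ ≤ _ := by linarith
  have hDa : (1 - (√2 + 1) * δ) * l2norm (r 0 + r 1) ≤ √(1 + δ) * l2norm (A *ᵥ h) := by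
    have := mul_le_mul_of_nonneg_left htail (mul_nonneg (Real.sqrt_nonneg 2) hδ)
    linarith
  rcases le_or_gt 0 (1 - (√2 + 1) * δ) with hD | hD
  · nlinarith [mul_le_mul_of_nonneg_left hsplit hD]
  · nlinarith [l2norm_nonneg h, l2norm_nonneg (A *ᵥ h), Real.sqrt_nonneg (1 + δ)]

end RIP

theorem basis_pursuit_sparse_recovery_noisy {m n k : ℕ}
    (hk : 1 ≤ k) (hn : 2 * k ≤ n)
    (A : Matrix (Fin m) (Fin n) ℝ) (δ : ℝ) (hδ0 : 0 < δ)
    (hδ : δ < Real.sqrt 2 - 1)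
    (hRIP : RIP A (2 * k) δ)
    (x : Fin n → ℝ) (hx : KSparse k x)
    (η : Fin m → ℝ) (ε : ℝ) (hη : l2norm η ≤ ε)
    (y : Fin m → ℝ) (hy : y = A.mulVec x + η)
    (xhat : Fin n → ℝ)
    (hfeas : l2norm (y - A.mulVec xhat) ≤ ε)
    (hopt : ∀ z : Fin n → ℝ, l2norm (y - A.mulVec z) ≤ ε → l1norm xhat ≤ l1norm z) :
    l2norm (xhat - x) ≤
      (4 * Real.sqrt (1 + δ) / (1 - (Real.sqrt 2 + 1) * δ)) * ε := by
  have hyx : y - A *ᵥ x = η := by rw [hy]; abel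
  have hAh : l2norm (A *ᵥ (xhat - x)) ≤ 2 * ε := by
    rw [show A *ᵥ (xhat - x) = η - (y - A *ᵥ xhat) by rw [← hyx, mulVec_sub]; abel]
    linarith [l2norm_sub_le η (y - A *ᵥ xhat)]
  obtain ⟨T, hxT, hT⟩ := hx.exists_superset (by omega)
  have hcone := sum_abs_compl_le_of_l1norm_add_le hxT (h := xhat - x)
    (by simpa using hopt x (hyx ▸ hη))
  have hkey := RIP.mul_l2norm_le_of_cone hRIP hδ0.le hk hT hcone
  have hD : 0 < 1 - (√2 + 1) * δ := by
    nlinarith [Real.mul_self_sqrt (show (0 : ℝ) ≤ 2 by norm_num), Real.sqrt_nonneg 2]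
  rw [div_mul_eq_mul_div, le_div_iff₀ hD]
  nlinarith [Real.sqrt_nonneg (1 + δ)]
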